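/- arXiv:1607.00133 — 3 statements merged into one kernel-verified Lean document; each statement's English description precedes it below -/
import Mathlib

section
/- Let μ₀ be the density of N(0,σ²), μ₁ the density of N(1,σ²), and μ = (1−q)μ₀ + qμ₁ for q ∈ (0,1). Then E_{z∼μ}[((μ₀(z) − μ(z))/μ(z))²] ≤ (q²/(1−q))·(exp(1/σ²) − 1). -/
/-!
The integrand equals `q²(μ₀ − μ₁)²/μ`, and `μ ≥ (1 − q)μ₀` bounds it by
`q²/(1 − q) · (μ₀ − 2μ₁ + μ₁²/μ₀)`. Completing the square shows that `μ₁²/μ₀` is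
`exp(1/σ²)` times the density of `N(2, σ²)`, so the bound integrates to
`q²/(1 − q) · (1 − 2 + exp(1/σ²))`.
-/

open MeasureTheory Real

noncomputable def gaussianDensity (σ m z : ℝ) : ℝ :=
  (1 / (σ * Real.sqrt (2 * Real.pi))) * Real.exp (-((z - m) ^ 2) / (2 * σ ^ 2))

section GaussianDensity

variable {σ : ℝ}

lemma gaussianDensity_pos (hσ : 0 < σ) (m z : ℝ) : 0 < gaussianDensity σ m z := by
  unfold gaussianDensity
  positivity

lemma gaussianDensity_eq_gaussianPDFReal (hσ : 0 < σ) (m : ℝ) :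
    gaussianDensity σ m = ProbabilityTheory.gaussianPDFReal m (σ ^ 2).toNNReal := by
  ext z
  have hsqrt : √(2 * π * σ ^ 2) = σ * √(2 * π) := by
    rw [mul_comm (2 * π), sqrt_mul (sq_nonneg σ), sqrt_sq hσ.le]
  simp only [gaussianDensity, ProbabilityTheory.gaussianPDFReal, coe_toNNReal _ (sq_nonneg σ), hsqrt,
    one_div, neg_div]

lemma integrable_gaussianDensity (hσ : 0 < σ) (m : ℝ) : Integrable (gaussianDensity σ m) := by
  rw [gaussianDensity_eq_gaussianPDFReal hσ]
  exact ProbabilityTheory.integrable_gaussianPDFReal m _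

lemma integral_gaussianDensity (hσ : 0 < σ) (m : ℝ) : ∫ z, gaussianDensity σ m z = 1 := by
  rw [gaussianDensity_eq_gaussianPDFReal hσ]
  exact ProbabilityTheory.integral_gaussianPDFReal_eq_one m
    (by simpa using hσ.ne')

lemma gaussianDensity_sq_div (hσ : σ ≠ 0) (m m' z : ℝ) :
    gaussianDensity σ m z ^ 2 / gaussianDensity σ m' z
      = exp ((m - m') ^ 2 / σ ^ 2) * gaussianDensity σ (2 * m - m') z := by
  have hexp : exp (-((z - m) ^ 2) / (2 * σ ^ 2)) ^ 2
      = exp ((m - m') ^ 2 / σ ^ 2) * exp (-((z - (2 * m - m')) ^ 2) / (2 * σ ^ 2))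
        * exp (-((z - m') ^ 2) / (2 * σ ^ 2)) := by
    rw [sq, ← exp_add, ← exp_add, ← exp_add]
    congr 1
    field_simp
    ring
  have hsqrt : 0 < √(2 * π) := sqrt_pos.2 (by positivity)
  simp only [gaussianDensity]
  rw [div_eq_iff (by positivity), mul_pow, hexp]
  ring

lemma integrable_gaussianDensity_sq_div (hσ : 0 < σ) (m m' : ℝ) :
    Integrable fun z ↦ gaussianDensity σ m z ^ 2 / gaussianDensity σ m' z := by
  simp_rw [gaussianDensity_sq_div hσ.ne']
  exact (integrable_gaussianDensity hσ _).const_mul _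

lemma integral_gaussianDensity_sq_div (hσ : 0 < σ) (m m' : ℝ) :
    ∫ z, gaussianDensity σ m z ^ 2 / gaussianDensity σ m' z = exp ((m - m') ^ 2 / σ ^ 2) := by
  simp_rw [gaussianDensity_sq_div hσ.ne', integral_const_mul, integral_gaussianDensity hσ, mul_one]

end GaussianDensity

lemma mixture_mul_sq_div_le {a b q : ℝ} (ha : 0 < a) (hb : 0 ≤ b) (hq0 : 0 ≤ q) (hq1 : q < 1) :
    ((1 - q) * a + q * b) * ((a - ((1 - q) * a + q * b)) / ((1 - q) * a + q * b)) ^ 2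
      ≤ q ^ 2 / (1 - q) * (a - 2 * b + b ^ 2 / a) := by
  have hqa : 0 < (1 - q) * a := mul_pos (by linarith) ha
  have hmix : (1 - q) * a ≤ (1 - q) * a + q * b := le_add_of_nonneg_right (mul_nonneg hq0 hb)
  calc ((1 - q) * a + q * b) * ((a - ((1 - q) * a + q * b)) / ((1 - q) * a + q * b)) ^ 2
      = q ^ 2 * (a - b) ^ 2 / ((1 - q) * a + q * b) := by
        field_simp [(hqa.trans_le hmix).ne']
        ring
    _ ≤ q ^ 2 * (a - b) ^ 2 / ((1 - q) * a) := by gcongr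
    _ = q ^ 2 / (1 - q) * (a - 2 * b + b ^ 2 / a) := by
        field_simp [hqa.ne']
        ring

/-- Second-moment bound for the mixture `μ = (1−q)μ₀ + qμ₁`:
`E_{z∼μ}[((μ₀ − μ)/μ)²] ≤ (q²/(1−q))·(exp(1/σ²) − 1)`. -/
theorem mixture_second_moment_bound (σ q : ℝ) (hσ : 0 < σ) (hq0 : 0 < q) (hq1 : q < 1) :
    ∫ z : ℝ,
        ((1 - q) * gaussianDensity σ 0 z + q * gaussianDensity σ 1 z) *
          ((gaussianDensity σ 0 z -
              ((1 - q) * gaussianDensity σ 0 z + q * gaussianDensity σ 1 z)) /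
            ((1 - q) * gaussianDensity σ 0 z + q * gaussianDensity σ 1 z)) ^ 2
      ≤ q ^ 2 / (1 - q) * (Real.exp (1 / σ ^ 2) - 1) := by
  have h₀ : Integrable fun z ↦ gaussianDensity σ 0 z := integrable_gaussianDensity hσ 0
  have h₁ : Integrable fun z ↦ 2 * gaussianDensity σ 1 z :=
    (integrable_gaussianDensity hσ 1).const_mul 2
  have h₂ := integrable_gaussianDensity_sq_div hσ 1 0
  have h₀₁ : Integrable fun z ↦ gaussianDensity σ 0 z - 2 * gaussianDensity σ 1 z := h₀.sub h₁
  have hbound : ∫ z, q ^ 2 / (1 - q) * (gaussianDensity σ 0 z - 2 * gaussianDensity σ 1 z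
        + gaussianDensity σ 1 z ^ 2 / gaussianDensity σ 0 z)
      = q ^ 2 / (1 - q) * (exp (1 / σ ^ 2) - 1) := by
    rw [integral_const_mul, integral_add h₀₁ h₂, integral_sub h₀ h₁, integral_const_mul,
      integral_gaussianDensity hσ, integral_gaussianDensity hσ, integral_gaussianDensity_sq_div hσ]
    simp only [sub_zero, one_pow]
    ring
  refine hbound ▸ integral_mono_of_nonneg (Filter.Eventually.of_forall fun z ↦ ?_)
    ((h₀₁.add h₂).const_mul _) (Filter.Eventually.of_forall fun z ↦ ?_)
  · have := gaussianDensity_pos hσ 0 z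
    have := gaussianDensity_pos hσ 1 z
    positivity
  · exact mixture_mul_sq_div_le (gaussianDensity_pos hσ 0 z) (gaussianDensity_pos hσ 1 z).le
      hq0.le hq1
end

section
/- Let μ₀ be the density of N(0,σ²) and μ₁ the density of N(1,σ²). Then for all z ≥ 1, |μ₀(z) − μ₁(z)| ≤ z·μ₁(z)/σ², and for all z ≤ 0, |μ₀(z) − μ₁(z)| ≤ (1−z)·μ₀(z)/σ². -/
open MeasureTheory Real

/-!
Two Gaussian densities with the same variance differ by an exponential factor:
`μ_m(z) = μ_{m'}(z) · exp(-t)` with `t = ((z - m)² - (z - m')²) / (2σ²)`, and `t ≥ 0` when `z` is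
closer to `m'` than to `m`. Since `0 ≤ 1 - exp(-t) ≤ t`, this gives `|μ_m(z) - μ_{m'}(z)| ≤ μ_{m'}(z) · t`.
For `z ≥ 1` (resp. `z ≤ 0`) the exponent is `(2z - 1)/(2σ²) ≤ z/σ²` (resp. `(1 - 2z)/(2σ²) ≤ (1 - z)/σ²`).
-/

lemma abs_sub_mul_exp_neg_le {a t : ℝ} (ha : 0 ≤ a) (ht : 0 ≤ t) :
    |a - a * exp (-t)| ≤ a * t := by
  have h_nonneg : 0 ≤ 1 - exp (-t) := by
    linarith [exp_le_one_iff.mpr (neg_nonpos.mpr ht)]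
  have h_le : 1 - exp (-t) ≤ t := by linarith [one_sub_le_exp_neg t]
  rw [← mul_one_sub, abs_of_nonneg (mul_nonneg ha h_nonneg)]
  exact mul_le_mul_of_nonneg_left h_le ha

lemma gaussianDensity_nonneg {σ : ℝ} (hσ : 0 ≤ σ) (m z : ℝ) : 0 ≤ gaussianDensity σ m z := by
  unfold gaussianDensity
  positivity

lemma gaussianDensity_eq_mul_exp (σ m m' z : ℝ) :
    gaussianDensity σ m z =
      gaussianDensity σ m' z * exp (-(((z - m) ^ 2 - (z - m') ^ 2) / (2 * σ ^ 2))) := by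
  simp only [gaussianDensity, mul_assoc, ← exp_add]
  congr 2
  ring

lemma abs_gaussianDensity_sub_le {σ : ℝ} (hσ : 0 ≤ σ) {m m' z : ℝ}
    (hz : (z - m') ^ 2 ≤ (z - m) ^ 2) :
    |gaussianDensity σ m z - gaussianDensity σ m' z|
      ≤ gaussianDensity σ m' z * (((z - m) ^ 2 - (z - m') ^ 2) / (2 * σ ^ 2)) := by
  rw [abs_sub_comm, gaussianDensity_eq_mul_exp σ m m' z]
  exact abs_sub_mul_exp_neg_le (gaussianDensity_nonneg hσ m' z)
    (div_nonneg (sub_nonneg.mpr hz) (by positivity))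

/-- Tail bounds on the difference of the two Gaussian densities:
for `z ≥ 1`, `|μ₀(z) − μ₁(z)| ≤ z·μ₁(z)/σ²`, and for `z ≤ 0`,
`|μ₀(z) − μ₁(z)| ≤ (1−z)·μ₀(z)/σ²`. -/
theorem density_diff_tail_bounds (σ : ℝ) (hσ : 0 < σ) :
    (∀ z : ℝ, 1 ≤ z →
      |gaussianDensity σ 0 z - gaussianDensity σ 1 z|
        ≤ z * gaussianDensity σ 1 z / σ ^ 2) ∧
    (∀ z : ℝ, z ≤ 0 →
      |gaussianDensity σ 0 z - gaussianDensity σ 1 z|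
        ≤ (1 - z) * gaussianDensity σ 0 z / σ ^ 2) := by
  refine ⟨fun z hz => ?_, fun z hz => ?_⟩
  · calc |gaussianDensity σ 0 z - gaussianDensity σ 1 z|
        ≤ gaussianDensity σ 1 z * (((z - 0) ^ 2 - (z - 1) ^ 2) / (2 * σ ^ 2)) :=
          abs_gaussianDensity_sub_le hσ.le (by nlinarith)
      _ ≤ gaussianDensity σ 1 z * (2 * z / (2 * σ ^ 2)) := by
          gcongr
          · exact gaussianDensity_nonneg hσ.le 1 z
          · linarith
      _ = z * gaussianDensity σ 1 z / σ ^ 2 := by field_simp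
  · calc |gaussianDensity σ 0 z - gaussianDensity σ 1 z|
        = |gaussianDensity σ 1 z - gaussianDensity σ 0 z| := abs_sub_comm _ _
      _ ≤ gaussianDensity σ 0 z * (((z - 1) ^ 2 - (z - 0) ^ 2) / (2 * σ ^ 2)) :=
          abs_gaussianDensity_sub_le hσ.le (by nlinarith)
      _ ≤ gaussianDensity σ 0 z * (2 * (1 - z) / (2 * σ ^ 2)) := by
          gcongr
          · exact gaussianDensity_nonneg hσ.le 0 z
          · linarith
      _ = (1 - z) * gaussianDensity σ 0 z / σ ^ 2 := by field_simp
end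

section
/- Let M be an ε-differentially private mechanism with discrete output, and for adjacent d, d' let Z = c(M(d)) be the privacy loss random variable. Then |Z| ≤ ε almost surely and E[Z] ≤ ε(e^ε − 1). -/
open Real Finset

/-- For an `ε`-differentially private mechanism with discrete output, the privacy loss
`Z = log(p(o)/q(o))` for `o ∼ p` satisfies `|Z| ≤ ε` (surely) and `E[Z] ≤ ε(e^ε − 1)`. -/
theorem pure_dp_privacy_loss_bounds {Ω : Type*} [Fintype Ω] (p q : Ω → ℝ) (ε : ℝ)
    (hp : ∀ o, 0 < p o) (hq : ∀ o, 0 < q o)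
    (hpprob : ∑ o, p o = 1) (hqprob : ∑ o, q o = 1)
    (hdp : ∀ o, p o ≤ Real.exp ε * q o ∧ q o ≤ Real.exp ε * p o) :
    (∀ o, |Real.log (p o / q o)| ≤ ε) ∧
    (∑ o, p o * Real.log (p o / q o) ≤ ε * (Real.exp ε - 1)) := by
  have hne : (Finset.univ : Finset Ω).Nonempty := by
    by_contra h
    rw [Finset.not_nonempty_iff_eq_empty] at h
    rw [h] at hpprob
    simp at hpprob
  obtain ⟨o₀, -⟩ := hne
  have he1 : 1 ≤ Real.exp ε := by
    nlinarith [(hdp o₀).1, (hdp o₀).2, hp o₀, hq o₀, Real.exp_pos ε]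
  have hε : 0 ≤ ε := by
    by_contra h
    push_neg at h
    have := Real.exp_lt_one_iff.mpr h
    linarith
  have habs : ∀ o, |Real.log (p o / q o)| ≤ ε := by
    intro o
    have hpq : 0 < p o / q o := div_pos (hp o) (hq o)
    rw [abs_le]
    constructor
    · rw [Real.le_log_iff_exp_le hpq, Real.exp_neg, le_div_iff₀ (hq o),
        inv_mul_le_iff₀ (Real.exp_pos ε)]
      exact (hdp o).2
    · rw [Real.log_le_iff_le_exp hpq, div_le_iff₀ (hq o)]
      exact (hdp o).1
  refine ⟨habs, ?_⟩
  have hterm : ∀ o, p o * Real.log (p o / q o) ≤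
      ε * (Real.exp ε - 1) * min (p o) (q o) + (p o - q o) := by
    intro o
    have hpq : 0 < p o / q o := div_pos (hp o) (hq o)
    have hL := Real.log_le_sub_one_of_pos hpq
    have hql : q o * Real.log (p o / q o) ≤ p o - q o := by
      have h1 := mul_le_mul_of_nonneg_left hL (hq o).le
      have h2 : q o * (p o / q o) = p o := by
        rw [mul_comm, div_mul_cancel₀ _ (hq o).ne']
      nlinarith
    have hmain : (p o - q o) * Real.log (p o / q o) ≤
        ε * (Real.exp ε - 1) * min (p o) (q o) := by
      rcases le_total (q o) (p o) with h | h
      · have hmin : min (p o) (q o) = q o := min_eq_right h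
        have hL2 : Real.log (p o / q o) ≤ ε := (abs_le.mp (habs o)).2
        have hL0 : 0 ≤ Real.log (p o / q o) :=
          Real.log_nonneg ((one_le_div (hq o)).mpr h)
        have hpq2 : p o - q o ≤ (Real.exp ε - 1) * q o := by
          nlinarith [(hdp o).1]
        rw [hmin]
        calc (p o - q o) * Real.log (p o / q o)
            ≤ ((Real.exp ε - 1) * q o) * ε :=
              mul_le_mul hpq2 hL2 hL0 (by nlinarith [hq o])
          _ = ε * (Real.exp ε - 1) * q o := by ring
      · have hmin : min (p o) (q o) = p o := min_eq_left h
        have hL2 : -Real.log (p o / q o) ≤ ε := by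
          have := (abs_le.mp (habs o)).1
          linarith
        have hL0 : Real.log (p o / q o) ≤ 0 := by
          apply Real.log_nonpos (le_of_lt hpq)
          rw [div_le_one (hq o)]
          exact h
        have hqp2 : q o - p o ≤ (Real.exp ε - 1) * p o := by
          nlinarith [(hdp o).2]
        rw [hmin]
        calc (p o - q o) * Real.log (p o / q o)
            = (q o - p o) * (-Real.log (p o / q o)) := by ring
          _ ≤ ((Real.exp ε - 1) * p o) * ε :=
              mul_le_mul hqp2 hL2 (by linarith) (by nlinarith [hp o])
          _ = ε * (Real.exp ε - 1) * p o := by ring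
    nlinarith
  have hminsum : ∑ o, min (p o) (q o) ≤ 1 := by
    rw [← hpprob]
    exact Finset.sum_le_sum fun o _ => min_le_left _ _
  calc ∑ o, p o * Real.log (p o / q o)
      ≤ ∑ o, (ε * (Real.exp ε - 1) * min (p o) (q o) + (p o - q o)) :=
        Finset.sum_le_sum fun o _ => hterm o
    _ = ε * (Real.exp ε - 1) * (∑ o, min (p o) (q o)) + ((∑ o, p o) - ∑ o, q o) := by
        rw [Finset.sum_add_distrib, ← Finset.mul_sum, Finset.sum_sub_distrib]
    _ ≤ ε * (Real.exp ε - 1) * 1 + 0 := by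
        rw [hpprob, hqprob]
        have : 0 ≤ ε * (Real.exp ε - 1) := mul_nonneg hε (by linarith)
        nlinarith
    _ = ε * (Real.exp ε - 1) := by ring
end
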